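/- arXiv:2006.10670 — 2 statements merged into one kernel-verified Lean document; each statement's English description precedes it below -/
import Mathlib

section
/- Let k ∈ W^{1,1}(0,T) (absolutely continuous with integrable derivative), H : ℝ → ℝ continuously differentiable and convex, and φ : [0,T] → ℝ bounded and measurable. Then for almost every t ∈ [0,T], H'(φ(t)) · d/dt (k*φ)(t) = d/dt (k * (H∘φ))(t) + k(t)(−H(φ(t)) + H'(φ(t))φ(t)) − ∫₀ᵗ k'(s) [ H(φ(t−s)) − H(φ(t)) − H'(φ(t))(φ(t−s) − φ(t)) ] ds. -/
/-!
Both sides of the identity are affine in the derivatives of the Volterra convolutions `k * φ` and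
`k * (H ∘ φ)`, so everything rests on the formula `(k * ψ)' = k(0) ψ + k' * ψ` a.e. on `[0, T]`
for `ψ ∈ L¹(0, T)`. Writing `k(τ - s) = k(0) + ∫ₛ^τ k'(r - s) dr` and exchanging the order of
integration over the triangle `0 < s ≤ r ≤ τ` gives `(k * ψ)(τ) = ∫₀^τ (k(0) ψ + k' * ψ)`, and
the Lebesgue differentiation theorem differentiates the right-hand side. With `ψ = φ` and
`ψ = H ∘ φ`, and `k(t) = k(0) + ∫₀ᵗ k'`, the identity becomes a rearrangement of the integral
`∫₀ᵗ k'(s) [H(φ(t-s)) - H(φ(t)) - H'(φ(t))(φ(t-s) - φ(t))] ds`.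
-/

open MeasureTheory intervalIntegral Set Function

def triangle (a b : ℝ) : Set (ℝ × ℝ) := {p | a < p.2 ∧ p.2 ≤ p.1 ∧ p.1 ≤ b}

theorem measurableSet_triangle (a b : ℝ) : MeasurableSet (triangle a b) :=
  (measurableSet_lt measurable_const measurable_snd).inter
    ((measurableSet_le measurable_snd measurable_fst).inter
      (measurableSet_le measurable_fst measurable_const))

section Triangle

variable {E : Type*} [NormedAddCommGroup E] {a b : ℝ} {F : ℝ → ℝ → E}

theorem integrable_indicator_triangle (hF : IntegrableOn (uncurry F) (triangle a b)) :
    Integrable (uncurry fun r s => (triangle a b).indicator (uncurry F) (r, s))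
      (volume.prod volume) :=
  (integrable_indicator_iff (measurableSet_triangle a b)).2 hF

variable [NormedSpace ℝ E]

theorem integral_indicator_triangle_fst (r : ℝ) :
    ∫ s, (triangle a b).indicator (uncurry F) (r, s) =
      (Ioc a b).indicator (fun r => ∫ s in a..r, F r s) r := by
  by_cases hr : r ∈ Ioc a b
  · rw [indicator_of_mem hr, integral_of_le hr.1.le,
      ← MeasureTheory.integral_indicator measurableSet_Ioc]
    congr 1 with s
    simp [indicator, triangle, hr.2]
  · rw [indicator_of_notMem hr]
    refine integral_eq_zero_of_ae (ae_of_all _ fun s => indicator_of_notMem ?_ _)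
    exact fun h => hr ⟨h.1.trans_le h.2.1, h.2.2⟩

theorem integral_indicator_triangle_snd (s : ℝ) :
    ∫ r, (triangle a b).indicator (uncurry F) (r, s) =
      (Ioc a b).indicator (fun s => ∫ r in s..b, F r s) s := by
  by_cases hs : s ∈ Ioc a b
  · rw [indicator_of_mem hs, integral_of_le hs.2, ← integral_Icc_eq_integral_Ioc,
      ← MeasureTheory.integral_indicator measurableSet_Icc]
    congr 1 with r
    simp [indicator, triangle, hs.1]
  · rw [indicator_of_notMem hs]
    refine integral_eq_zero_of_ae (ae_of_all _ fun r => indicator_of_notMem ?_ _)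
    exact fun h => hs ⟨h.1, h.2.1.trans h.2.2⟩

theorem intervalIntegrable_integral_triangle_fst
    (hF : IntegrableOn (uncurry F) (triangle a b)) (hab : a ≤ b) :
    IntervalIntegrable (fun r => ∫ s in a..r, F r s) volume a b := by
  have h := (integrable_indicator_triangle hF).integral_prod_left
  simp only [uncurry_apply_pair, integral_indicator_triangle_fst] at h
  exact (intervalIntegrable_iff_integrableOn_Ioc_of_le hab).2
    ((integrable_indicator_iff measurableSet_Ioc).1 h)

theorem intervalIntegrable_integral_triangle_snd
    (hF : IntegrableOn (uncurry F) (triangle a b)) (hab : a ≤ b) :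
    IntervalIntegrable (fun s => ∫ r in s..b, F r s) volume a b := by
  have h := (integrable_indicator_triangle hF).integral_prod_right
  simp only [uncurry_apply_pair, integral_indicator_triangle_snd] at h
  exact (intervalIntegrable_iff_integrableOn_Ioc_of_le hab).2
    ((integrable_indicator_iff measurableSet_Ioc).1 h)

theorem integral_integral_triangle_swap (hF : IntegrableOn (uncurry F) (triangle a b))
    (hab : a ≤ b) : ∫ s in a..b, ∫ r in s..b, F r s = ∫ r in a..b, ∫ s in a..r, F r s := by
  rw [integral_of_le hab, integral_of_le hab,
    ← MeasureTheory.integral_indicator measurableSet_Ioc,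
    ← MeasureTheory.integral_indicator measurableSet_Ioc]
  simp_rw [← integral_indicator_triangle_fst, ← integral_indicator_triangle_snd]
  exact (integral_integral_swap (integrable_indicator_triangle hF)).symm

end Triangle

noncomputable def volterraConv (k ψ : ℝ → ℝ) (t : ℝ) : ℝ := ∫ s in (0:ℝ)..t, k (t - s) * ψ s

theorem volterraConv_comm (k ψ : ℝ → ℝ) : volterraConv k ψ = volterraConv ψ k := by
  ext t
  have h := integral_comp_sub_left (fun s => k (t - s) * ψ s) (a := 0) (b := t) t
  simp only [sub_sub_cancel, sub_self, sub_zero] at h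
  rw [volterraConv, volterraConv, ← h]
  exact integral_congr fun s _ => mul_comm _ _

section Volterra

variable {T : ℝ} {k K ψ : ℝ → ℝ}

theorem integrableOn_uIcc_of_mem_Icc (hψ : IntegrableOn ψ (Icc 0 T)) {t : ℝ}
    (ht : t ∈ Icc 0 T) : IntegrableOn ψ (uIcc 0 t) :=
  hψ.mono_set (by rw [uIcc_of_le ht.1]; exact Icc_subset_Icc_right ht.2)

theorem integrableOn_Icc_of_abs_le {C : ℝ} (hψm : Measurable ψ) (hψb : ∀ s, |ψ s| ≤ C) :
    IntegrableOn ψ (Icc 0 T) :=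
  Measure.integrableOn_of_bounded measure_Icc_lt_top.ne hψm.aestronglyMeasurable
    (ae_of_all _ hψb)

theorem integrableOn_triangle_volterraConv (hK : IntegrableOn K (Icc 0 T))
    (hψ : IntegrableOn ψ (Icc 0 T)) {τ : ℝ} (hτ : τ ≤ T) :
    IntegrableOn (uncurry fun r s => K (r - s) * ψ s) (triangle 0 τ) := by
  have h := ((integrable_indicator_iff measurableSet_Icc).2 hψ).convolution_integrand
    (ContinuousLinearMap.mul ℝ ℝ) ((integrable_indicator_iff measurableSet_Icc).2 hK)
  refine h.integrableOn.congr_fun (fun p ⟨hs, hsr, hr⟩ => ?_) (measurableSet_triangle 0 τ)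
  have hψp : p.2 ∈ Icc 0 T := ⟨hs.le, by linarith⟩
  have hKp : p.1 - p.2 ∈ Icc 0 T := ⟨by linarith, by linarith⟩
  simp only [ContinuousLinearMap.mul_apply', indicator_of_mem hψp, indicator_of_mem hKp]
  exact mul_comm _ _

theorem volterraConv_eq_integral (hk : ∀ t ∈ Icc (0:ℝ) T, k t = k 0 + ∫ s in (0:ℝ)..t, K s)
    (hK : IntegrableOn K (Icc 0 T)) (hψ : IntegrableOn ψ (Icc 0 T)) {τ : ℝ} (hτ : τ ∈ Icc 0 T) :
    volterraConv k ψ τ = ∫ r in (0:ℝ)..τ, (k 0 * ψ r + volterraConv K ψ r) := by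
  have hF := integrableOn_triangle_volterraConv hK hψ hτ.2
  have hψτ : IntervalIntegrable (fun s => k 0 * ψ s) volume 0 τ :=
    (integrableOn_uIcc_of_mem_Icc hψ hτ).intervalIntegrable.const_mul _
  calc volterraConv k ψ τ
      = ∫ s in (0:ℝ)..τ, (k 0 * ψ s + ∫ r in s..τ, K (r - s) * ψ s) := by
        refine integral_congr fun s hs => ?_
        rw [uIcc_of_le hτ.1] at hs
        rw [hk (τ - s) ⟨by linarith [hs.2], by linarith [hs.1, hτ.2]⟩,
          intervalIntegral.integral_mul_const, integral_comp_sub_right, sub_self]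
        ring
    _ = ∫ r in (0:ℝ)..τ, (k 0 * ψ r + volterraConv K ψ r) := by
        rw [integral_add hψτ (intervalIntegrable_integral_triangle_snd hF hτ.1),
          integral_integral_triangle_swap hF hτ.1,
          ← integral_add hψτ (intervalIntegrable_integral_triangle_fst hF hτ.1)]
        rfl

theorem ae_hasDerivAt_volterraConv
    (hk : ∀ t ∈ Icc (0:ℝ) T, k t = k 0 + ∫ s in (0:ℝ)..t, K s)
    (hK : IntegrableOn K (Icc 0 T)) (hψ : IntegrableOn ψ (Icc 0 T)) :
    ∀ᵐ t ∂(volume.restrict (Icc 0 T)),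
      HasDerivAt (volterraConv k ψ) (k 0 * ψ t + volterraConv K ψ t) t := by
  rcases lt_or_ge T 0 with hT | hT
  · simp [Icc_eq_empty_of_lt hT]
  have hg : IntervalIntegrable (fun r => k 0 * ψ r + volterraConv K ψ r) volume 0 T :=
    ((integrableOn_uIcc_of_mem_Icc hψ ⟨hT, le_rfl⟩).intervalIntegrable.const_mul _).add
      (intervalIntegrable_integral_triangle_fst
        (integrableOn_triangle_volterraConv hK hψ le_rfl) hT)
  rw [ae_restrict_congr_set Ioo_ae_eq_Icc.symm]
  filter_upwards [ae_restrict_of_ae hg.ae_hasDerivAt_integral,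
    ae_restrict_mem measurableSet_Ioo] with t hderiv ht
  have ht' : t ∈ uIcc 0 T := by rw [uIcc_of_le hT]; exact Ioo_subset_Icc_self ht
  refine (hderiv ht' 0 left_mem_uIcc).congr_of_eventuallyEq ?_
  filter_upwards [Ioo_mem_nhds ht.1 ht.2] with τ hτ
  exact volterraConv_eq_integral hk hK hψ (Ioo_subset_Icc_self hτ)

theorem intervalIntegrable_volterraConv_integrand {C t : ℝ} (hK : IntegrableOn K (Icc 0 T))
    (hψm : Measurable ψ) (hψb : ∀ s, |ψ s| ≤ C) (ht : t ∈ Icc 0 T) :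
    IntervalIntegrable (fun s => ψ (t - s) * K s) volume 0 t :=
  IntegrableOn.intervalIntegrable <| Integrable.bdd_mul (integrableOn_uIcc_of_mem_Icc hK ht)
    (hψm.comp (measurable_const.sub measurable_id)).aestronglyMeasurable
    (ae_of_all _ fun _ => (Real.norm_eq_abs _).trans_le (hψb _))

end Volterra

theorem convolution_chain_rule_identity_general
    (T : ℝ)
    (k k' : ℝ → ℝ)
    -- `k ∈ W^{1,1}(0,T)`: absolutely continuous with integrable derivative `k'`
    (hk' : IntegrableOn k' (Set.Icc 0 T))
    (hk : ∀ t ∈ Set.Icc (0:ℝ) T, k t = k 0 + ∫ s in (0:ℝ)..t, k' s)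
    (H : ℝ → ℝ) (hH : ContDiff ℝ 1 H)
    (φ : ℝ → ℝ) (hφm : Measurable φ) (M : ℝ) (hφb : ∀ t, |φ t| ≤ M)
    -- `D₁` is the a.e. derivative of `k*φ`, `D₂` that of `k*(H∘φ)`
    (D₁ D₂ : ℝ → ℝ)
    (hD₁ : ∀ᵐ t ∂(volume.restrict (Set.Icc (0:ℝ) T)),
      HasDerivAt (fun τ => ∫ s in (0:ℝ)..τ, k (τ - s) * φ s) (D₁ t) t)
    (hD₂ : ∀ᵐ t ∂(volume.restrict (Set.Icc (0:ℝ) T)),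
      HasDerivAt (fun τ => ∫ s in (0:ℝ)..τ, k (τ - s) * H (φ s)) (D₂ t) t) :
    ∀ᵐ t ∂(volume.restrict (Set.Icc (0:ℝ) T)),
      deriv H (φ t) * D₁ t =
        D₂ t + k t * (-(H (φ t)) + deriv H (φ t) * φ t)
          - ∫ s in (0:ℝ)..t,
              k' s * (H (φ (t - s)) - H (φ t) - deriv H (φ t) * (φ (t - s) - φ t)) := by
  obtain ⟨C, hC⟩ := (isCompact_Icc (a := -M) (b := M)).exists_bound_of_continuousOn
    hH.continuous.continuousOn
  have hHφm : Measurable fun s => H (φ s) := hH.continuous.measurable.comp hφm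
  have hHφb (s : ℝ) : |H (φ s)| ≤ C := hC _ (abs_le.1 (hφb s))
  filter_upwards [ae_hasDerivAt_volterraConv hk hk' (integrableOn_Icc_of_abs_le hφm hφb),
    ae_hasDerivAt_volterraConv hk hk' (integrableOn_Icc_of_abs_le hHφm hHφb),
    hD₁, hD₂, ae_restrict_mem measurableSet_Icc] with t h₁ h₂ hd₁ hd₂ ht
  have hsplit : ∫ s in (0:ℝ)..t,
      k' s * (H (φ (t - s)) - H (φ t) - deriv H (φ t) * (φ (t - s) - φ t)) =
        volterraConv (fun s => H (φ s)) k' t - deriv H (φ t) * volterraConv φ k' t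
          - (H (φ t) - deriv H (φ t) * φ t) * ∫ s in (0:ℝ)..t, k' s := by
    have hφK := intervalIntegrable_volterraConv_integrand hk' hφm hφb ht
    have hHφK := intervalIntegrable_volterraConv_integrand hk' hHφm hHφb ht
    have hk't := (integrableOn_uIcc_of_mem_Icc hk' ht).intervalIntegrable
    rw [volterraConv, volterraConv, ← intervalIntegral.integral_const_mul,
      ← intervalIntegral.integral_const_mul,
      ← intervalIntegral.integral_sub hHφK (hφK.const_mul _),
      ← intervalIntegral.integral_sub (hHφK.sub (hφK.const_mul _)) (hk't.const_mul _)]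
    exact integral_congr fun s _ => by ring
  rw [hd₁.unique h₁, hd₂.unique h₂, volterraConv_comm k', volterraConv_comm k', hsplit, hk t ht]
  ring

/-- Convolution identity for `C¹` convex `H`, `k ∈ W^{1,1}(0,T)` and bounded measurable `φ`:
for a.e. `t ∈ [0,T]`,
`H'(φ(t)) · d/dt (k*φ)(t) = d/dt (k*(H∘φ))(t) + k(t)(−H(φ(t)) + H'(φ(t))φ(t))
  − ∫₀ᵗ k'(s)[H(φ(t−s)) − H(φ(t)) − H'(φ(t))(φ(t−s) − φ(t))] ds`. -/
theorem convolution_chain_rule_identity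
    (T : ℝ) (hT : 0 < T)
    (k k' : ℝ → ℝ)
    -- `k ∈ W^{1,1}(0,T)`: absolutely continuous with integrable derivative `k'`
    (hk' : IntegrableOn k' (Set.Icc 0 T))
    (hk : ∀ t ∈ Set.Icc (0:ℝ) T, k t = k 0 + ∫ s in (0:ℝ)..t, k' s)
    (H : ℝ → ℝ) (hH : ContDiff ℝ 1 H) (hHconv : ConvexOn ℝ Set.univ H)
    (φ : ℝ → ℝ) (hφm : Measurable φ) (M : ℝ) (hφb : ∀ t, |φ t| ≤ M)
    -- `D₁` is the a.e. derivative of `k*φ`, `D₂` that of `k*(H∘φ)`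
    (D₁ D₂ : ℝ → ℝ)
    (hD₁ : ∀ᵐ t ∂(volume.restrict (Set.Icc (0:ℝ) T)),
      HasDerivAt (fun τ => ∫ s in (0:ℝ)..τ, k (τ - s) * φ s) (D₁ t) t)
    (hD₂ : ∀ᵐ t ∂(volume.restrict (Set.Icc (0:ℝ) T)),
      HasDerivAt (fun τ => ∫ s in (0:ℝ)..τ, k (τ - s) * H (φ s)) (D₂ t) t) :
    ∀ᵐ t ∂(volume.restrict (Set.Icc (0:ℝ) T)),
      deriv H (φ t) * D₁ t =
        D₂ t + k t * (-(H (φ t)) + deriv H (φ t) * φ t)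
          - ∫ s in (0:ℝ)..t,
              k' s * (H (φ (t - s)) - H (φ t) - deriv H (φ t) * (φ (t - s) - φ t)) :=
  convolution_chain_rule_identity_general T k k' hk' hk H hH φ hφm M hφb D₁ D₂ hD₁ hD₂
end

section
/- (Fractional integration by parts) Let H be a real Hilbert space, φ₁ ∈ L²(0,T;H), φ₂ ∈ H¹(0,T;H), and α ∈ (0,1). Then ∫₀ᵀ ⟨∂_t(g_{1−α}*φ₁)(t), φ₂(t)⟩ dt = −∫₀ᵀ ⟨φ₁(t), (g_{1−α} *' ∂_t φ₂)(t)⟩ dt + ⟨(g_{1−α}*φ₁)(T), φ₂(T)⟩ − ⟨(g_{1−α}*φ₁)(0), φ₂(0)⟩, where (g*'ψ)(t) = ∫_t^T g(s−t)ψ(s) ds, assuming g_{1−α}*φ₁ is absolutely continuous with L² derivative. -/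
/-!
Writing `φ₂ t = φ₂ T - ∫ₜᵀ φ₂'` and exchanging the order of integration over the triangle
`{0 < t < s ≤ T}` turns `∫₀ᵀ ⟪K', φ₂⟫` into `⟪F T, φ₂ T⟫ - ∫₀ᵀ ⟪F, φ₂'⟫`, where `F = g * φ₁` is
the primitive of `K'` vanishing at `0`. A second exchange over the same triangle moves the kernel
across the pairing: `∫₀ᵀ ⟪g * φ₁, φ₂'⟫ = ∫₀ᵀ ⟪φ₁, g *' φ₂'⟫`. Both exchanges are legitimate because
on the square `(0, T]²` the kernel `g (s - u)` cut off to `u < s` is the truncation of `g` to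
`(0, T]`, an `L¹` function, so the integrands are dominated by convolution integrands of `L¹`
functions once `‖φ₁ u‖ ‖φ₂' s‖ ≤ ‖φ₁ u‖² + ‖φ₂' s‖²`.
-/

open MeasureTheory intervalIntegral RealInnerProductSpace

/-- Riemann--Liouville kernel `g_β(t) = t^(β-1)/Γ(β)`. -/
noncomputable def rlKernel (β t : ℝ) : ℝ := t ^ (β - 1) / Real.Gamma β

open Set Function

lemma Ioc_inter_Iio_of_le {α : Type*} [LinearOrder α] {a b s : α} (hs : s ≤ b) :
    Ioc a b ∩ Iio s = Ioo a s := by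
  ext x
  simp only [mem_inter_iff, mem_Ioc, mem_Iio, mem_Ioo]
  grind

section Triangle

variable {E : Type*} [NormedAddCommGroup E] {f : ℝ → ℝ → E} {a b : ℝ}

lemma setIntegral_indicator_lt_section_right [NormedSpace ℝ E] {t : ℝ} (ht : t ∈ Icc a b) :
    ∫ s in Ioc a b, {p : ℝ × ℝ | p.1 < p.2}.indicator (uncurry f) (t, s)
      = ∫ s in t..b, f t s := by
  change ∫ s in Ioc a b, (Ioi t).indicator (f t) s = _
  rw [setIntegral_indicator measurableSet_Ioi, Ioc_inter_Ioi, max_eq_right ht.1,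
    integral_of_le ht.2]

lemma setIntegral_indicator_lt_section_left [NormedSpace ℝ E] {s : ℝ} (hs : s ∈ Icc a b) :
    ∫ t in Ioc a b, {p : ℝ × ℝ | p.1 < p.2}.indicator (uncurry f) (t, s)
      = ∫ t in a..s, f t s := by
  change ∫ t in Ioc a b, (Iio s).indicator (fun t => f t s) t = _
  rw [setIntegral_indicator measurableSet_Iio, Ioc_inter_Iio_of_le hs.2,
    ← integral_Ioc_eq_integral_Ioo, integral_of_le hs.1]

lemma MeasureTheory.Integrable.ae_intervalIntegrable_section_right
    (hf : Integrable ({p : ℝ × ℝ | p.1 < p.2}.indicator (uncurry f))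
      ((volume.restrict (Ioc a b)).prod (volume.restrict (Ioc a b)))) :
    ∀ᵐ t ∂volume.restrict (Ioc a b), IntervalIntegrable (f t) volume t b := by
  filter_upwards [ae_restrict_mem measurableSet_Ioc, hf.prod_right_ae] with t ht hft
  change Integrable ((Ioi t).indicator (f t)) _ at hft
  rw [integrable_indicator_iff measurableSet_Ioi, IntegrableOn,
    Measure.restrict_restrict measurableSet_Ioi, inter_comm, Ioc_inter_Ioi,
    max_eq_right ht.1.le] at hft
  exact (intervalIntegrable_iff_integrableOn_Ioc_of_le ht.2).2 hft

lemma MeasureTheory.Integrable.ae_intervalIntegrable_section_left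
    (hf : Integrable ({p : ℝ × ℝ | p.1 < p.2}.indicator (uncurry f))
      ((volume.restrict (Ioc a b)).prod (volume.restrict (Ioc a b)))) :
    ∀ᵐ s ∂volume.restrict (Ioc a b), IntervalIntegrable (fun t => f t s) volume a s := by
  filter_upwards [ae_restrict_mem measurableSet_Ioc, hf.prod_left_ae] with s hs hfs
  change Integrable ((Iio s).indicator (fun t => f t s)) _ at hfs
  rw [integrable_indicator_iff measurableSet_Iio, IntegrableOn,
    Measure.restrict_restrict measurableSet_Iio, inter_comm, Ioc_inter_Iio_of_le hs.2] at hfs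
  exact (intervalIntegrable_iff_integrableOn_Ioc_of_le hs.1.le).2
    ((integrableOn_Ioc_iff_integrableOn_Ioo enorm_ne_top).2 hfs)

lemma MeasureTheory.Integrable.intervalIntegrable_integral_section_right [NormedSpace ℝ E]
    (hf : Integrable ({p : ℝ × ℝ | p.1 < p.2}.indicator (uncurry f))
      ((volume.restrict (Ioc a b)).prod (volume.restrict (Ioc a b)))) (hab : a ≤ b) :
    IntervalIntegrable (fun t => ∫ s in t..b, f t s) volume a b := by
  refine (intervalIntegrable_iff_integrableOn_Ioc_of_le hab).2 (hf.integral_prod_left.congr ?_)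
  filter_upwards [ae_restrict_mem measurableSet_Ioc] with t ht
  exact setIntegral_indicator_lt_section_right ⟨ht.1.le, ht.2⟩

theorem intervalIntegral_integral_swap_triangle [NormedSpace ℝ E]
    (hf : Integrable ({p : ℝ × ℝ | p.1 < p.2}.indicator (uncurry f))
      ((volume.restrict (Ioc a b)).prod (volume.restrict (Ioc a b)))) (hab : a ≤ b) :
    ∫ t in a..b, ∫ s in t..b, f t s = ∫ s in a..b, ∫ t in a..s, f t s := by
  rw [integral_of_le hab, integral_of_le hab]
  set F := {p : ℝ × ℝ | p.1 < p.2}.indicator (uncurry f)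
  calc ∫ t in Ioc a b, ∫ s in t..b, f t s
      = ∫ t in Ioc a b, ∫ s in Ioc a b, F (t, s) :=
        setIntegral_congr_fun measurableSet_Ioc fun t ht =>
          (setIntegral_indicator_lt_section_right ⟨ht.1.le, ht.2⟩).symm
    _ = ∫ s in Ioc a b, ∫ t in Ioc a b, F (t, s) := integral_integral_swap hf
    _ = ∫ s in Ioc a b, ∫ t in a..s, f t s :=
        setIntegral_congr_fun measurableSet_Ioc fun s hs =>
          setIntegral_indicator_lt_section_left ⟨hs.1.le, hs.2⟩

end Triangle

section Convolution

variable {E : Type*} [NormedAddCommGroup E] [NormedSpace ℝ E] {k : ℝ → ℝ} {T : ℝ}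

noncomputable def forwardConv (k : ℝ → ℝ) (f : ℝ → E) (t : ℝ) : E :=
  ∫ s in 0..t, k (t - s) • f s

noncomputable def backwardConv (k : ℝ → ℝ) (T : ℝ) (f : ℝ → E) (t : ℝ) : E :=
  ∫ s in t..T, k (s - t) • f s

lemma indicator_Ioc_sub_smul_eq_indicator_lt {u s : ℝ} (hu : u ∈ Ioc 0 T) (hs : s ∈ Ioc 0 T)
    (g : ℝ → ℝ → E) :
    (Ioc 0 T).indicator k (s - u) • g u s
      = {p : ℝ × ℝ | p.1 < p.2}.indicator (uncurry fun u s => k (s - u) • g u s) (u, s) := by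
  by_cases h : u < s
  · have hsu : s - u ∈ Ioc 0 T := ⟨by linarith, by linarith [hu.1, hs.2]⟩
    simp [indicator_of_mem hsu, h]
  · simp [h]

lemma integrable_indicator_lt_kernel_smul_fst {w : ℝ → E} (hk : IntegrableOn k (Ioc 0 T))
    (hw : IntegrableOn w (Ioc 0 T)) :
    Integrable ({p : ℝ × ℝ | p.1 < p.2}.indicator (uncurry fun u s => k (s - u) • w u))
      ((volume.restrict (Ioc 0 T)).prod (volume.restrict (Ioc 0 T))) := by
  have hconv := ((hw.integrable_indicator measurableSet_Ioc).convolution_integrand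
    (ContinuousLinearMap.lsmul ℝ ℝ).flip (hk.integrable_indicator measurableSet_Ioc)
    (μ := volume)).swap.restrict (s := Ioc 0 T ×ˢ Ioc 0 T)
  rw [← Measure.prod_restrict] at hconv
  refine hconv.congr ?_
  rw [Measure.prod_restrict]
  filter_upwards [ae_restrict_mem (measurableSet_Ioc.prod measurableSet_Ioc)]
    with ⟨u, s⟩ ⟨hu, hs⟩
  simpa [indicator_of_mem hu] using indicator_Ioc_sub_smul_eq_indicator_lt hu hs fun u _ => w u

lemma integrable_indicator_lt_kernel_smul_snd {w : ℝ → E} (hk : IntegrableOn k (Ioc 0 T))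
    (hw : IntegrableOn w (Ioc 0 T)) :
    Integrable ({p : ℝ × ℝ | p.1 < p.2}.indicator (uncurry fun u s => k (s - u) • w s))
      ((volume.restrict (Ioc 0 T)).prod (volume.restrict (Ioc 0 T))) := by
  have hconv := ((hw.integrable_indicator measurableSet_Ioc).convolution_integrand
    (ContinuousLinearMap.lsmul ℝ ℝ).flip (hk.integrable_indicator measurableSet_Ioc).comp_neg
    (μ := volume)).restrict (s := Ioc 0 T ×ˢ Ioc 0 T)
  rw [← Measure.prod_restrict] at hconv
  refine hconv.congr ?_
  rw [Measure.prod_restrict]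
  filter_upwards [ae_restrict_mem (measurableSet_Ioc.prod measurableSet_Ioc)]
    with ⟨u, s⟩ ⟨hu, hs⟩
  simpa [indicator_of_mem hs] using indicator_Ioc_sub_smul_eq_indicator_lt hu hs fun _ s => w s

end Convolution

section Inner

variable {H : Type*} [NormedAddCommGroup H] [InnerProductSpace ℝ H] {k : ℝ → ℝ} {T : ℝ}

lemma integrable_indicator_lt_kernel_mul_inner {f g : ℝ → H} (hk : IntegrableOn k (Ioc 0 T))
    (hf : MemLp f 2 (volume.restrict (Ioc 0 T))) (hg : MemLp g 2 (volume.restrict (Ioc 0 T))) :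
    Integrable
      ({p : ℝ × ℝ | p.1 < p.2}.indicator (uncurry fun u s => k (s - u) * ⟪f u, g s⟫))
      ((volume.restrict (Ioc 0 T)).prod (volume.restrict (Ioc 0 T))) := by
  have hdom :=
    (integrable_indicator_lt_kernel_smul_fst hk.norm (hf.integrable_norm_pow two_ne_zero)).add
      (integrable_indicator_lt_kernel_smul_snd hk.norm (hg.integrable_norm_pow two_ne_zero))
  have hmeas := (integrable_indicator_lt_kernel_smul_fst hk (hf.integrable one_le_two)
    ).aestronglyMeasurable.inner (𝕜 := ℝ) hg.aestronglyMeasurable.comp_snd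
  refine hdom.mono' (hmeas.congr (.of_forall fun ⟨u, s⟩ => ?_))
    (.of_forall fun ⟨u, s⟩ => ?_)
  · by_cases h : u < s <;> simp [h, real_inner_smul_left]
  · by_cases h : u < s
    · simp only [mem_ofPred_eq, h, indicator_of_mem, Pi.add_apply, uncurry_apply_pair]
      rw [norm_mul, smul_eq_mul, smul_eq_mul, ← mul_add]
      gcongr
      nlinarith [norm_inner_le_norm (𝕜 := ℝ) (f u) (g s), sq_nonneg (‖f u‖ - ‖g s‖)]
    · simp [h]

variable [CompleteSpace H]

lemma intervalIntegral_const_inner {a b : ℝ} {f : ℝ → H}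
    (hf : IntervalIntegrable f volume a b) (c : H) :
    ∫ x in a..b, ⟪c, f x⟫ = ⟪c, ∫ x in a..b, f x⟫ :=
  (innerSL ℝ c).intervalIntegral_comp_comm hf

lemma intervalIntegral_inner_const {a b : ℝ} {f : ℝ → H}
    (hf : IntervalIntegrable f volume a b) (c : H) :
    ∫ x in a..b, ⟪f x, c⟫ = ⟪∫ x in a..b, f x, c⟫ :=
  ((innerSL ℝ).flip c).intervalIntegral_comp_comm hf

theorem integral_inner_forwardConv_eq_integral_inner_backwardConv (hT : 0 ≤ T)
    (hk : IntegrableOn k (Ioc 0 T)) {f g : ℝ → H} (hf : MemLp f 2 (volume.restrict (Ioc 0 T)))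
    (hg : MemLp g 2 (volume.restrict (Ioc 0 T))) :
    ∫ s in 0..T, ⟪forwardConv k f s, g s⟫
      = ∫ u in 0..T, ⟪f u, backwardConv k T g u⟫ := by
  calc ∫ s in 0..T, ⟪forwardConv k f s, g s⟫
      = ∫ s in 0..T, ∫ u in 0..s, k (s - u) * ⟪f u, g s⟫ := by
        refine integral_congr_ae_restrict ?_
        rw [uIoc_of_le hT]
        filter_upwards [(integrable_indicator_lt_kernel_smul_fst hk
          (hf.integrable one_le_two)).ae_intervalIntegrable_section_left] with s hs
        rw [forwardConv, ← intervalIntegral_inner_const hs]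
        simp only [real_inner_smul_left]
    _ = ∫ u in 0..T, ∫ s in u..T, k (s - u) * ⟪f u, g s⟫ :=
        (intervalIntegral_integral_swap_triangle
          (integrable_indicator_lt_kernel_mul_inner hk hf hg) hT).symm
    _ = ∫ u in 0..T, ⟪f u, backwardConv k T g u⟫ := by
        refine integral_congr_ae_restrict ?_
        rw [uIoc_of_le hT]
        filter_upwards [(integrable_indicator_lt_kernel_smul_snd hk
          (hg.integrable one_le_two)).ae_intervalIntegrable_section_right] with u hu
        rw [backwardConv, ← intervalIntegral_const_inner hu]
        simp only [real_inner_smul_right]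

theorem integral_inner_eq_inner_sub_integral_inner_primitive (hT : 0 ≤ T) {F' G G' : ℝ → H}
    (hF' : IntegrableOn F' (Ioc 0 T)) (hG' : IntegrableOn G' (Ioc 0 T))
    (hG : ∀ t ∈ Icc 0 T, G t = G 0 + ∫ s in 0..t, G' s) :
    ∫ t in 0..T, ⟪F' t, G t⟫
      = ⟪∫ t in 0..T, F' t, G T⟫ - ∫ s in 0..T, ⟪∫ t in 0..s, F' t, G' s⟫ := by
  have hF'T : IntervalIntegrable F' volume 0 T :=
    (intervalIntegrable_iff_integrableOn_Ioc_of_le hT).2 hF'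
  have hG'T : IntervalIntegrable G' volume 0 T :=
    (intervalIntegrable_iff_integrableOn_Ioc_of_le hT).2 hG'
  have hGT : ∀ t ∈ uIcc 0 T, G t = G T - ∫ s in t..T, G' s := fun t ht => by
    rw [← integral_interval_sub_left hG'T (hG'T.mono_set (uIcc_subset_uIcc_left ht)),
      hG T ⟨hT, le_rfl⟩, hG t (uIcc_of_le hT ▸ ht)]
    abel
  have hpair :
      Integrable ({p : ℝ × ℝ | p.1 < p.2}.indicator (uncurry fun t s => ⟪F' t, G' s⟫))
      ((volume.restrict (Ioc 0 T)).prod (volume.restrict (Ioc 0 T))) :=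
    ((hF'.norm.mul_prod hG'.norm).mono' (hF'.aestronglyMeasurable.comp_fst.inner (𝕜 := ℝ)
      hG'.aestronglyMeasurable.comp_snd) (.of_forall fun p => norm_inner_le_norm _ _)).indicator
      (measurableSet_lt measurable_fst measurable_snd)
  calc ∫ t in 0..T, ⟪F' t, G t⟫
      = ∫ t in 0..T, (⟪F' t, G T⟫ - ∫ s in t..T, ⟪F' t, G' s⟫) :=
        integral_congr fun t ht => by
          simp only [hGT t ht, inner_sub_right,
            intervalIntegral_const_inner (hG'T.mono_set (uIcc_subset_uIcc_right ht))]
    _ = ⟪∫ t in 0..T, F' t, G T⟫ - ∫ s in 0..T, ∫ t in 0..s, ⟪F' t, G' s⟫ := by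
        rw [integral_sub ((intervalIntegrable_iff_integrableOn_Ioc_of_le hT).2
            (hF'.inner_const (𝕜 := ℝ) (G T)))
            (hpair.intervalIntegrable_integral_section_right hT),
          intervalIntegral_inner_const hF'T, intervalIntegral_integral_swap_triangle hpair hT]
    _ = ⟪∫ t in 0..T, F' t, G T⟫ - ∫ s in 0..T, ⟪∫ t in 0..s, F' t, G' s⟫ := by
        congr 1
        exact integral_congr fun s hs =>
          intervalIntegral_inner_const (hF'T.mono_set (uIcc_subset_uIcc_left hs)) _

end Inner

lemma intervalIntegrable_rlKernel {β : ℝ} (hβ : 0 < β) (a b : ℝ) :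
    IntervalIntegrable (rlKernel β) volume a b :=
  (intervalIntegrable_rpow' (by linarith)).div_const _

theorem fractional_integration_by_parts_general
    {H : Type*} [NormedAddCommGroup H] [InnerProductSpace ℝ H] [CompleteSpace H]
    (T α : ℝ) (hT : 0 < T) (hα1 : α < 1)
    (φ₁ : ℝ → H) (hφ₁ : MemLp φ₁ 2 (volume.restrict (Set.Ioc (0:ℝ) T)))
    -- `φ₂ ∈ H¹(0,T;H)`: absolutely continuous with `L²` derivative `φ₂'`
    (φ₂ φ₂' : ℝ → H) (hφ₂' : MemLp φ₂' 2 (volume.restrict (Set.Ioc (0:ℝ) T)))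
    (hφ₂ : ∀ t ∈ Set.Icc (0:ℝ) T, φ₂ t = φ₂ 0 + ∫ s in (0:ℝ)..t, φ₂' s)
    -- `g_{1−α}*φ₁` is absolutely continuous with `L²` derivative `K'`
    (K' : ℝ → H) (hK' : MemLp K' 2 (volume.restrict (Set.Ioc (0:ℝ) T)))
    (hK : ∀ t ∈ Set.Icc (0:ℝ) T,
      (∫ s in (0:ℝ)..t, rlKernel (1 - α) (t - s) • φ₁ s) =
        (∫ s in (0:ℝ)..(0:ℝ), rlKernel (1 - α) (0 - s) • φ₁ s) + ∫ s in (0:ℝ)..t, K' s) :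
    (∫ t in (0:ℝ)..T, ⟪K' t, φ₂ t⟫) =
      -(∫ t in (0:ℝ)..T, ⟪φ₁ t, ∫ s in t..T, rlKernel (1 - α) (s - t) • φ₂' s⟫)
        + ⟪∫ s in (0:ℝ)..T, rlKernel (1 - α) (T - s) • φ₁ s, φ₂ T⟫
        - ⟪∫ s in (0:ℝ)..(0:ℝ), rlKernel (1 - α) (0 - s) • φ₁ s, φ₂ 0⟫ := by
  have hprimitive :
      ∀ t ∈ uIcc 0 T, ∫ s in 0..t, K' s = forwardConv (rlKernel (1 - α)) φ₁ t :=
    fun t ht => by simpa [forwardConv] using (hK t (uIcc_of_le hT.le ▸ ht)).symm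
  have hconv : ∫ s in 0..T, ⟪∫ t in 0..s, K' t, φ₂' s⟫
      = ∫ s in 0..T, ⟪forwardConv (rlKernel (1 - α)) φ₁ s, φ₂' s⟫ :=
    integral_congr fun s hs => by rw [hprimitive s hs]
  rw [integral_inner_eq_inner_sub_integral_inner_primitive hT.le (hK'.integrable one_le_two)
      (hφ₂'.integrable one_le_two) hφ₂, hconv, hprimitive T right_mem_uIcc,
    integral_inner_forwardConv_eq_integral_inner_backwardConv hT.le
      (intervalIntegrable_rlKernel (by linarith) 0 T).1 hφ₁ hφ₂',
    integral_same, inner_zero_left]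
  unfold forwardConv backwardConv
  ring

/-- Fractional integration by parts: for `φ₁ ∈ L²(0,T;H)` and `φ₂ ∈ H¹(0,T;H)`,
`∫₀ᵀ ⟨∂ₜ(g_{1−α}*φ₁), φ₂⟩ dt = −∫₀ᵀ ⟨φ₁, g_{1−α} *' ∂ₜφ₂⟩ dt
  + ⟨(g_{1−α}*φ₁)(T), φ₂(T)⟩ − ⟨(g_{1−α}*φ₁)(0), φ₂(0)⟩`. -/
theorem fractional_integration_by_parts
    {H : Type*} [NormedAddCommGroup H] [InnerProductSpace ℝ H] [CompleteSpace H]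
    (T α : ℝ) (hT : 0 < T) (hα0 : 0 < α) (hα1 : α < 1)
    (φ₁ : ℝ → H) (hφ₁ : MemLp φ₁ 2 (volume.restrict (Set.Ioc (0:ℝ) T)))
    -- `φ₂ ∈ H¹(0,T;H)`: absolutely continuous with `L²` derivative `φ₂'`
    (φ₂ φ₂' : ℝ → H) (hφ₂' : MemLp φ₂' 2 (volume.restrict (Set.Ioc (0:ℝ) T)))
    (hφ₂ : ∀ t ∈ Set.Icc (0:ℝ) T, φ₂ t = φ₂ 0 + ∫ s in (0:ℝ)..t, φ₂' s)
    -- `g_{1−α}*φ₁` is absolutely continuous with `L²` derivative `K'`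
    (K' : ℝ → H) (hK' : MemLp K' 2 (volume.restrict (Set.Ioc (0:ℝ) T)))
    (hK : ∀ t ∈ Set.Icc (0:ℝ) T,
      (∫ s in (0:ℝ)..t, rlKernel (1 - α) (t - s) • φ₁ s) =
        (∫ s in (0:ℝ)..(0:ℝ), rlKernel (1 - α) (0 - s) • φ₁ s) + ∫ s in (0:ℝ)..t, K' s) :
    (∫ t in (0:ℝ)..T, ⟪K' t, φ₂ t⟫) =
      -(∫ t in (0:ℝ)..T, ⟪φ₁ t, ∫ s in t..T, rlKernel (1 - α) (s - t) • φ₂' s⟫)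
        + ⟪∫ s in (0:ℝ)..T, rlKernel (1 - α) (T - s) • φ₁ s, φ₂ T⟫
        - ⟪∫ s in (0:ℝ)..(0:ℝ), rlKernel (1 - α) (0 - s) • φ₁ s, φ₂ 0⟫ :=
  fractional_integration_by_parts_general T α hT hα1 φ₁ hφ₁ φ₂ φ₂' hφ₂' hφ₂ K' hK' hK
end
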